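/- arXiv:0902.4719 — 5 statements merged into one kernel-verified Lean document; each statement's English description precedes it below -/
import Mathlib

section
/- Let H be a complex Hilbert space, B a topological space, and A : B → B(H) a map that is continuous for the operator-norm topology such that each A_x is a self-adjoint Fredholm operator and the function x ↦ dim ker(A_x) is locally constant on B. Then the map x ↦ p_x, where p_x is the orthogonal projection of H onto ker(A_x), is continuous for the operator-norm topology. -/
/-!
Fix `x₀` and let `P₀` project onto `K₀ = ker A x₀`. Since `A x₀` has closed range, the open
mapping theorem gives `‖v - P₀ v‖ ≤ C ‖A x₀ v‖`; for `u ∈ ker A x` the right side is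
`C ‖(A x - A x₀) u‖`, so `ker A x` is within gap `a = C ‖A x - A x₀‖` of `K₀`. When the two kernels
have the same finite dimension and `a ≤ 1/2`, projecting `ker A x` onto `K₀` is a bijection, which
yields the reverse gap bound `2a`. The identity `P - Q = P (1 - Q) - (1 - P) Q` for orthogonal
projections then bounds `‖P_x - P₀‖` by `3a`, which tends to `0` as `x → x₀`.
-/

/-- A bounded operator on a Hilbert space is Fredholm if its kernel is finite-dimensional
and its range is closed and of finite codimension. -/
def IsFredholm {H : Type*} [NormedAddCommGroup H] [InnerProductSpace ℂ H]
    (T : H →L[ℂ] H) : Prop :=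
  FiniteDimensional ℂ (LinearMap.ker (T : H →ₗ[ℂ] H)) ∧ IsClosed (LinearMap.range (T : H →ₗ[ℂ] H) : Set H) ∧
    FiniteDimensional ℂ (H ⧸ LinearMap.range (T : H →ₗ[ℂ] H))

open Classical in
/-- The orthogonal projection of `H` onto the kernel of `T`, as a bounded operator
`H →L[ℂ] H` (defined to be `0` if the kernel is not finite-dimensional). -/
noncomputable def kerProjection {H : Type*} [NormedAddCommGroup H] [InnerProductSpace ℂ H]
    (T : H →L[ℂ] H) : H →L[ℂ] H :=
  if h : FiniteDimensional ℂ (LinearMap.ker (T : H →ₗ[ℂ] H)) then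
    haveI := h
    (LinearMap.ker (T : H →ₗ[ℂ] H)).subtypeL.comp (LinearMap.ker (T : H →ₗ[ℂ] H)).orthogonalProjectionOnto
  else 0

open Module Filter Topology

namespace Submodule

variable {𝕜 E : Type*} [RCLike 𝕜] [NormedAddCommGroup E] [InnerProductSpace 𝕜 E]

theorem norm_sub_starProjection_le (K : Submodule 𝕜 E) [K.HasOrthogonalProjection] (y : E)
    {w : E} (hw : w ∈ K) : ‖y - K.starProjection y‖ ≤ ‖y - w‖ := by
  rw [starProjection_minimal]
  exact ciInf_le ⟨0, by rintro _ ⟨x, rfl⟩; exact norm_nonneg _⟩ (⟨w, hw⟩ : K)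

variable {K L : Submodule 𝕜 E} [K.HasOrthogonalProjection] [L.HasOrthogonalProjection]

theorem norm_one_sub_starProjection_mul_starProjection_le {a : ℝ} (ha : 0 ≤ a)
    (hL : ∀ u ∈ L, ‖u - K.starProjection u‖ ≤ a * ‖u‖) :
    ‖(1 - K.starProjection) * L.starProjection‖ ≤ a :=
  ContinuousLinearMap.opNorm_le_bound _ ha fun v =>
    calc ‖L.starProjection v - K.starProjection (L.starProjection v)‖
        ≤ a * ‖L.starProjection v‖ := hL _ (L.starProjection_apply_mem v)
      _ ≤ a * ‖v‖ := by gcongr; exact L.norm_starProjection_apply_le v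

theorem norm_starProjection_sub_starProjection_le [CompleteSpace E] {a b : ℝ} (ha : 0 ≤ a)
    (hb : 0 ≤ b) (hL : ∀ u ∈ L, ‖u - K.starProjection u‖ ≤ a * ‖u‖)
    (hK : ∀ w ∈ K, ‖w - L.starProjection w‖ ≤ b * ‖w‖) :
    ‖K.starProjection - L.starProjection‖ ≤ a + b := by
  set P := K.starProjection
  set Q := L.starProjection
  have hP : star P = P := isSelfAdjoint_starProjection K
  have hQ : star Q = Q := isSelfAdjoint_starProjection L
  calc ‖P - Q‖ = ‖P * (1 - Q) - (1 - P) * Q‖ := by congr 1; noncomm_ring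
    _ ≤ ‖star (P * (1 - Q))‖ + ‖(1 - P) * Q‖ := by
        rw [norm_star (P * (1 - Q))]; exact norm_sub_le _ _
    _ = ‖(1 - Q) * P‖ + ‖(1 - P) * Q‖ := by rw [star_mul, star_sub, star_one, hP, hQ]
    _ ≤ b + a := add_le_add (norm_one_sub_starProjection_mul_starProjection_le hb hK)
        (norm_one_sub_starProjection_mul_starProjection_le ha hL)
    _ = a + b := add_comm b a

/-- The projection onto `K` is injective on `L`, hence onto `K`. -/
theorem norm_sub_starProjection_le_of_finrank_eq [FiniteDimensional 𝕜 K] [FiniteDimensional 𝕜 L]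
    (hdim : finrank 𝕜 L = finrank 𝕜 K) {a : ℝ} (ha0 : 0 ≤ a) (ha : a ≤ 1 / 2)
    (hL : ∀ u ∈ L, ‖u - K.starProjection u‖ ≤ a * ‖u‖) (w : E) (hw : w ∈ K) :
    ‖w - L.starProjection w‖ ≤ 2 * a * ‖w‖ := by
  have hinj : Function.Injective (K.orthogonalProjectionOnto.toLinearMap ∘ₗ L.subtype) := by
    refine (injective_iff_map_eq_zero _).2 fun u hu => ?_
    have hPu : K.starProjection u = 0 := congrArg Subtype.val hu
    have := hL u u.2
    rw [hPu, sub_zero] at this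
    exact Subtype.ext <| norm_eq_zero.1 <| by nlinarith [norm_nonneg (u : E)]
  obtain ⟨u, hu⟩ := (LinearMap.injective_iff_surjective_of_finrank_eq_finrank hdim).1 hinj ⟨w, hw⟩
  have hPu : K.starProjection u = w := congrArg Subtype.val hu
  have hdist : ‖(u : E) - w‖ ≤ a * ‖(u : E)‖ := hPu ▸ hL u u.2
  have hu_le : ‖(u : E)‖ ≤ 2 * ‖w‖ := by
    nlinarith [norm_sub_norm_le (u : E) w, norm_nonneg (u : E)]
  calc ‖w - L.starProjection w‖ ≤ ‖w - u‖ := L.norm_sub_starProjection_le w u.2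
    _ = ‖(u : E) - w‖ := norm_sub_rev _ _
    _ ≤ a * ‖(u : E)‖ := hdist
    _ ≤ a * (2 * ‖w‖) := by gcongr
    _ = 2 * a * ‖w‖ := by ring

theorem norm_starProjection_sub_le_of_finrank_eq [CompleteSpace E] [FiniteDimensional 𝕜 K]
    [FiniteDimensional 𝕜 L] (hdim : finrank 𝕜 L = finrank 𝕜 K) {a : ℝ} (ha0 : 0 ≤ a)
    (ha : a ≤ 1 / 2) (hL : ∀ u ∈ L, ‖u - K.starProjection u‖ ≤ a * ‖u‖) :
    ‖K.starProjection - L.starProjection‖ ≤ 3 * a := by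
  have := norm_starProjection_sub_starProjection_le ha0 (by positivity) hL
    (norm_sub_starProjection_le_of_finrank_eq hdim ha0 ha hL)
  linarith

end Submodule

/-- Open mapping theorem applied to the corestriction of `T` to its closed range. -/
theorem ContinuousLinearMap.exists_norm_sub_starProjection_ker_le {𝕜 E F : Type*} [RCLike 𝕜]
    [NormedAddCommGroup E] [InnerProductSpace 𝕜 E] [CompleteSpace E] [NormedAddCommGroup F]
    [NormedSpace 𝕜 F] [CompleteSpace F] (T : E →L[𝕜] F)
    (hT : IsClosed (LinearMap.range (T : E →ₗ[𝕜] F) : Set F)) :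
    ∃ C > 0, ∀ v, ‖v - (LinearMap.ker (T : E →ₗ[𝕜] F)).starProjection v‖ ≤ C * ‖T v‖ := by
  have : CompleteSpace (LinearMap.range (T : E →ₗ[𝕜] F)) := hT.completeSpace_coe
  obtain ⟨C, hC, hpre⟩ := T.rangeRestrict.exists_preimage_norm_le
    (LinearMap.surjective_rangeRestrict (T : E →ₗ[𝕜] F))
  refine ⟨C, hC, fun v => ?_⟩
  obtain ⟨x, hx, hxv⟩ := hpre (T.rangeRestrict v)
  have hker : v - x ∈ LinearMap.ker (T : E →ₗ[𝕜] F) := by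
    have hTx : T x = T v := congrArg Subtype.val hx
    simp [hTx]
  calc ‖v - (LinearMap.ker (T : E →ₗ[𝕜] F)).starProjection v‖ ≤ ‖v - (v - x)‖ :=
        Submodule.norm_sub_starProjection_le _ v hker
    _ = ‖x‖ := by rw [sub_sub_cancel]
    _ ≤ C * ‖T v‖ := hxv

section

variable {H : Type*} [NormedAddCommGroup H] [InnerProductSpace ℂ H]

theorem kerProjection_eq (T : H →L[ℂ] H) [FiniteDimensional ℂ (LinearMap.ker (T : H →ₗ[ℂ] H))] :
    kerProjection T = (LinearMap.ker (T : H →ₗ[ℂ] H)).starProjection :=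
  dif_pos ‹_›

theorem exists_norm_kerProjection_sub_le [CompleteSpace H] (T : H →L[ℂ] H)
    [FiniteDimensional ℂ (LinearMap.ker (T : H →ₗ[ℂ] H))]
    (hT : IsClosed (LinearMap.range (T : H →ₗ[ℂ] H) : Set H)) :
    ∃ C, ∀ S : H →L[ℂ] H, FiniteDimensional ℂ (LinearMap.ker (S : H →ₗ[ℂ] H)) →
      finrank ℂ (LinearMap.ker (S : H →ₗ[ℂ] H)) = finrank ℂ (LinearMap.ker (T : H →ₗ[ℂ] H)) →
      C * ‖S - T‖ ≤ 1 / 2 → ‖kerProjection S - kerProjection T‖ ≤ 3 * (C * ‖S - T‖) := by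
  obtain ⟨C, hC, hTC⟩ := T.exists_norm_sub_starProjection_ker_le hT
  refine ⟨C, fun S _ hdim hsmall => ?_⟩
  have hgap : ∀ u ∈ LinearMap.ker (S : H →ₗ[ℂ] H),
      ‖u - (LinearMap.ker (T : H →ₗ[ℂ] H)).starProjection u‖ ≤ C * ‖S - T‖ * ‖u‖ := by
    intro u hu
    have hSu : S u = 0 := hu
    calc _ ≤ C * ‖T u‖ := hTC u
      _ = C * ‖(S - T) u‖ := by simp [hSu]
      _ ≤ C * (‖S - T‖ * ‖u‖) := by gcongr; exact (S - T).le_opNorm u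
      _ = C * ‖S - T‖ * ‖u‖ := by ring
  rw [kerProjection_eq, kerProjection_eq, norm_sub_rev]
  exact Submodule.norm_starProjection_sub_le_of_finrank_eq hdim (by positivity) hsmall hgap

end

theorem stmt1_general {H : Type*} [NormedAddCommGroup H] [InnerProductSpace ℂ H] [CompleteSpace H]
    {B : Type*} [TopologicalSpace B]
    (A : B → H →L[ℂ] H) (hA : Continuous A)
    (hfred : ∀ x, IsFredholm (A x))
    (hker : IsLocallyConstant fun x => Module.finrank ℂ (LinearMap.ker (A x : H →ₗ[ℂ] H))) :
    Continuous fun x => kerProjection (A x) := by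
  refine continuous_iff_continuousAt.2 fun x₀ => ?_
  have := (hfred x₀).1
  obtain ⟨C, hC⟩ := exists_norm_kerProjection_sub_le (A x₀) (hfred x₀).2.1
  have hA₀ : Tendsto (fun x => C * ‖A x - A x₀‖) (𝓝 x₀) (𝓝 0) := by
    simpa using (((hA.tendsto x₀).sub_const (A x₀)).norm).const_mul C
  rw [ContinuousAt, tendsto_iff_norm_sub_tendsto_zero]
  refine squeeze_zero' (Eventually.of_forall fun _ => norm_nonneg _) ?_
    (by simpa using hA₀.const_mul 3)
  filter_upwards [hker.eventually_eq x₀, hA₀.eventually (ge_mem_nhds one_half_pos)]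
    with x hdim hsmall
  exact hC (A x) (hfred x).1 hdim hsmall

/-- For a norm-continuous family of self-adjoint Fredholm operators with
locally constant kernel dimension, the family of orthogonal projections onto the kernels is
norm-continuous. -/
theorem stmt1 {H : Type*} [NormedAddCommGroup H] [InnerProductSpace ℂ H] [CompleteSpace H]
    {B : Type*} [TopologicalSpace B]
    (A : B → H →L[ℂ] H) (hA : Continuous A)
    (hsa : ∀ x, IsSelfAdjoint (A x)) (hfred : ∀ x, IsFredholm (A x))
    (hker : IsLocallyConstant fun x => Module.finrank ℂ (LinearMap.ker (A x : H →ₗ[ℂ] H))) :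
    Continuous fun x => kerProjection (A x) :=
  stmt1_general A hA hfred hker
end

section
/- Let A be an invertible bounded self-adjoint operator on a complex Hilbert space H that is neither essentially positive nor essentially negative, and let h(A) denote the operator obtained by applying the continuous functional calculus of A to the sign function (which is continuous on the spectrum of A since 0 does not belong to the spectrum). Then both eigenspaces ker(h(A) − 1) and ker(h(A) + 1) are infinite-dimensional. -/
open scoped ComplexOrder

def EssentiallyPositive {H : Type*} [NormedAddCommGroup H] [InnerProductSpace ℂ H]
    (A : H →L[ℂ] H) : Prop :=
  ∃ U : Submodule ℂ H, IsClosed (U : Set H) ∧ FiniteDimensional ℂ (H ⧸ U) ∧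
    (∀ u ∈ U, A u ∈ U) ∧ ∀ u ∈ U, u ≠ 0 → 0 < (inner ℂ (A u) u : ℂ)

/-!
Let `s = sign(A)`. Then `s² = 1`, `s` commutes with `A`, and `A s = |A|` is positive and
invertible, hence positive definite. The closed subspaces `ker (s - 1)` and `ker (s + 1)` are
complementary and `A`-invariant, and `A` agrees with `|A|` on the first and with `-|A|` on the
second. So if `ker (s + 1)` were finite-dimensional, `ker (s - 1)` would make `A` essentially
positive; replacing `(A, s)` by `(-A, -s)` gives the other half.
-/

theorem Real.continuousOn_sign {s : Set ℝ} (hs : 0 ∉ s) : ContinuousOn Real.sign s := by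
  intro x hx
  refine ContinuousAt.continuousWithinAt ?_
  rcases (ne_of_mem_of_not_mem hx hs).lt_or_gt with hneg | hpos
  · refine continuousAt_const.congr (f := fun _ ↦ (-1 : ℝ)) ?_
    filter_upwards [Iio_mem_nhds hneg] with y hy using (Real.sign_of_neg hy).symm
  · refine continuousAt_const.congr (f := fun _ ↦ (1 : ℝ)) ?_
    filter_upwards [Ioi_mem_nhds hpos] with y hy using (Real.sign_of_pos hy).symm

section SignFunctionalCalculus

variable {A : Type*} [Ring A] [StarRing A] [Algebra ℝ A] [TopologicalSpace A]
  [ContinuousFunctionalCalculus ℝ A IsSelfAdjoint] {a : A}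

theorem cfc_sign_mul_self (ha : IsSelfAdjoint a) (h0 : (0 : ℝ) ∉ spectrum ℝ a) :
    cfc Real.sign a * cfc Real.sign a = 1 := by
  have hcont := Real.continuousOn_sign h0
  rw [← cfc_mul _ _ a hcont hcont, ← cfc_one ℝ a ha]
  refine cfc_congr fun x hx ↦ ?_
  rcases Real.sign_apply_eq_of_ne_zero x (ne_of_mem_of_not_mem hx h0) with h | h <;> simp [h]

theorem isStrictlyPositive_mul_cfc_sign [PartialOrder A] [StarOrderedRing A]
    (ha : IsSelfAdjoint a) (hu : IsUnit a) :
    IsStrictlyPositive (a * cfc Real.sign a) := by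
  have h0 : (0 : ℝ) ∉ spectrum ℝ a := spectrum.zero_notMem ℝ hu
  have hss := cfc_sign_mul_self ha h0
  refine (hu.mul ⟨⟨_, _, hss, hss⟩, rfl⟩).isStrictlyPositive ?_
  nth_rewrite 1 [← cfc_id' ℝ a]
  rw [← cfc_mul (fun x ↦ x) _ a continuousOn_id (Real.continuousOn_sign h0)]
  exact cfc_nonneg fun x _ ↦ by simpa [mul_comm] using Real.sign_mul_nonneg x

end SignFunctionalCalculus

theorem IsStrictlyPositive.inner_map_self_pos {H : Type*} [NormedAddCommGroup H]
    [InnerProductSpace ℂ H] [CompleteSpace H] {T : H →L[ℂ] H} (hT : IsStrictlyPositive T)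
    {x : H} (hx : x ≠ 0) : 0 < inner ℂ (T x) x := by
  obtain ⟨b, hb, rfl⟩ := CStarAlgebra.isStrictlyPositive_iff_eq_star_mul_self.mp hT
  have hbx : b x ≠ 0 :=
    (map_ne_zero_iff _ (ContinuousLinearMap.isUnit_iff_bijective.mp hb).injective).mpr hx
  rw [ContinuousLinearMap.star_eq_adjoint, mul_apply_eq_comp,
    ContinuousLinearMap.adjoint_inner_left, inner_self_eq_norm_sq_to_K]
  exact pow_pos (RCLike.ofReal_pos.mpr (norm_pos_iff.mpr hbx)) 2

theorem Module.End.isCompl_ker_sub_one_ker_add_one {K V : Type*} [Field K] [NeZero (2 : K)]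
    [AddCommGroup V] [Module K V] {s : Module.End K V} (hs : s * s = 1) :
    IsCompl (LinearMap.ker (s - 1)) (LinearMap.ker (s + 1)) := by
  have hss (x : V) : s (s x) = x := congr($hs x)
  simp only [isCompl_iff, Submodule.disjoint_def, codisjoint_iff_le_sup, LinearMap.mem_ker,
    LinearMap.sub_apply, LinearMap.add_apply, Module.End.one_apply, sub_eq_zero,
    add_eq_zero_iff_eq_neg]
  refine ⟨fun x hx hx' ↦ ?_, fun x _ ↦ ?_⟩
  · have : (2 : K) • x = 0 := by rw [two_smul]; nth_rewrite 1 [← hx]; rw [hx', neg_add_cancel]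
    exact (smul_eq_zero.mp this).resolve_left two_ne_zero
  · refine Submodule.mem_sup.mpr ⟨(2⁻¹ : K) • (x + s x), ?_, (2⁻¹ : K) • (x - s x), ?_, ?_⟩
    · simp [hss, add_comm]
    · simp [hss]
    · rw [← smul_add, add_add_sub_cancel, ← two_smul K, smul_smul, inv_mul_cancel₀ two_ne_zero,
        one_smul]

section EssentiallyPositive

variable {H : Type*} [NormedAddCommGroup H] [InnerProductSpace ℂ H]

theorem EssentiallyPositive.of_isCompl {A : H →L[ℂ] H} {U V : Submodule ℂ H}
    (hU : IsClosed (U : Set H)) (hUV : IsCompl U V) [FiniteDimensional ℂ V]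
    (hAU : ∀ u ∈ U, A u ∈ U) (hpos : ∀ u ∈ U, u ≠ 0 → 0 < inner ℂ (A u) u) :
    EssentiallyPositive A :=
  ⟨U, hU, (Submodule.quotientEquivOfIsCompl U V hUV).symm.finiteDimensional, hAU, hpos⟩

variable [CompleteSpace H]

theorem EssentiallyPositive.of_involution {A s : H →L[ℂ] H} (hss : s * s = 1)
    (hAs : Commute A s) (hpos : IsStrictlyPositive (A * s))
    (hfin : FiniteDimensional ℂ (LinearMap.ker ((s + 1 : H →L[ℂ] H) : H →ₗ[ℂ] H))) :
    EssentiallyPositive A := by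
  have hcompl : IsCompl (LinearMap.ker ((s - 1 : H →L[ℂ] H) : H →ₗ[ℂ] H))
      (LinearMap.ker ((s + 1 : H →L[ℂ] H) : H →ₗ[ℂ] H)) :=
    Module.End.isCompl_ker_sub_one_ker_add_one congr(($hss : H →ₗ[ℂ] H))
  have hfix {u : H} (hu : u ∈ LinearMap.ker ((s - 1 : H →L[ℂ] H) : H →ₗ[ℂ] H)) : s u = u := by
    simpa [sub_eq_zero] using hu
  refine .of_isCompl (ContinuousLinearMap.isClosed_ker (s - 1)) hcompl (fun u hu ↦ ?_)
    fun u hu hu0 ↦ ?_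
  · have : s (A u) = A u := by rw [← mul_apply_eq_comp, ← hAs.eq, mul_apply_eq_comp, hfix hu]
    simpa [sub_eq_zero] using this
  · simpa [mul_apply_eq_comp, hfix hu] using hpos.inner_map_self_pos hu0

end EssentiallyPositive

/-- If `A` is an invertible bounded self-adjoint operator on a complex
Hilbert space which is neither essentially positive nor essentially negative, then both
eigenspaces `ker (h(A) - 1)` and `ker (h(A) + 1)` of `h(A) = cfc Real.sign A` are
infinite-dimensional. -/
theorem stmt4 {H : Type*} [NormedAddCommGroup H] [InnerProductSpace ℂ H] [CompleteSpace H]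
    (A : H →L[ℂ] H) (hsa : IsSelfAdjoint A) (hinv : IsUnit A)
    (hp : ¬EssentiallyPositive A) (hn : ¬EssentiallyPositive (-A)) :
    ¬FiniteDimensional ℂ (LinearMap.ker ((cfc Real.sign A - 1 : H →L[ℂ] H) : H →ₗ[ℂ] H)) ∧
    ¬FiniteDimensional ℂ (LinearMap.ker ((cfc Real.sign A + 1 : H →L[ℂ] H) : H →ₗ[ℂ] H)) := by
  set s := cfc Real.sign A
  have hss : s * s = 1 := cfc_sign_mul_self hsa (spectrum.zero_notMem ℝ hinv)
  have hAs : Commute A s := by simpa [cfc_id' ℝ A] using cfc_commute_cfc (fun x ↦ x) Real.sign A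
  have hpos : IsStrictlyPositive (A * s) := isStrictlyPositive_mul_cfc_sign hsa hinv
  refine ⟨fun hfin ↦ hn (.of_involution (s := -s) ?_ hAs.neg_left.neg_right ?_ ?_),
    fun hfin ↦ hp (.of_involution hss hAs hpos hfin)⟩
  · rwa [neg_mul_neg]
  · rwa [neg_mul_neg]
  · rwa [neg_add_eq_sub, ← neg_sub, ContinuousLinearMap.toLinearMap_neg, LinearMap.ker_neg]
end

section
/- Let H be a separable infinite-dimensional complex Hilbert space and let F₀ ∈ P(H). Then there exist an open neighborhood N of F₀ in P(H) and a continuous map u : N → U(H) into the unitary group of H (with the operator-norm topology) such that u(F₀) = 1 and u(F) · F₀ · u(F)⁻¹ = F for every F ∈ N; that is, the conjugation map U(H) → P(H), v ↦ v F₀ v⁻¹, admits a continuous local section near F₀. -/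
/-!
Two nearby self-adjoint involutions `F₀` and `F` are intertwined by their sum:
`F (F + F₀) = (F + F₀) F₀`. Moreover `(F + F₀)² = 4 - (F - F₀)²` commutes with `F₀` and, when
`‖F - F₀‖ ≤ 1`, has spectrum in `[3, 5]`. Hence the unitary part `(F + F₀) |F + F₀|⁻¹` of its polar
decomposition still intertwines `F₀` with `F`, and it depends continuously on `F` by continuity of
the continuous functional calculus on operators with spectrum in a fixed compact set. Composing
with `F₀` normalises the section to be `1` at `F₀`, where the polar part is `F₀` itself.
-/

/-- Membership in the space `P(H)`: bounded self-adjoint involutions whose `+1`- and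
`-1`-eigenspaces are both infinite-dimensional. -/
def MemP {H : Type*} [NormedAddCommGroup H] [InnerProductSpace ℂ H] [CompleteSpace H]
    (F : H →L[ℂ] H) : Prop :=
  IsSelfAdjoint F ∧ F * F = 1 ∧
    ¬FiniteDimensional ℂ (LinearMap.ker ((F - 1 : H →L[ℂ] H) : H →ₗ[ℂ] H)) ∧
    ¬FiniteDimensional ℂ (LinearMap.ker ((F + 1 : H →L[ℂ] H) : H →ₗ[ℂ] H))

lemma spectrum_subset_Icc_of_norm_sub_algebraMap_le {A : Type*} [NormedRing A]
    [NormedAlgebra ℝ A] [CompleteSpace A] [NormOneClass A] {a : A} {r ε : ℝ}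
    (h : ‖a - algebraMap ℝ A r‖ ≤ ε) : spectrum ℝ a ⊆ Set.Icc (r - ε) (r + ε) := by
  intro x hx
  have hx' : x - r ∈ spectrum ℝ (a - algebraMap ℝ A r) := by
    rw [← spectrum.sub_singleton_eq]
    exact Set.sub_mem_sub hx rfl
  rw [← Real.closedBall_eq_Icc, Metric.mem_closedBall, Real.dist_eq]
  exact (spectrum.norm_le_norm_of_mem hx').trans h

lemma continuousOn_inv_sqrt {s : Set ℝ} (hs : ∀ x ∈ s, 0 < x) :
    ContinuousOn (fun x : ℝ => (√x)⁻¹) s :=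
  Real.continuous_sqrt.continuousOn.inv₀ fun x hx => (Real.sqrt_pos.2 (hs x hx)).ne'

section Involution

variable {R : Type*} [Ring R] {e f : R}

lemma add_mul_self_add_eq_four_sub (he : e * e = 1) (hf : f * f = 1) :
    (f + e) * (f + e) = 4 - (f - e) * (f - e) := by
  have h4 : (4 : R) = f * f + f * f + e * e + e * e := by
    rw [he, hf]; norm_num
  rw [h4]; noncomm_ring

lemma mul_add_eq_add_mul_of_mul_self_eq_one (he : e * e = 1) (hf : f * f = 1) :
    f * (f + e) = (f + e) * e := by
  rw [mul_add, add_mul, hf, he, add_comm]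

lemma commute_add_mul_self_add (he : e * e = 1) (hf : f * f = 1) :
    Commute e ((f + e) * (f + e)) := by
  have hl : e * ((f + e) * (f + e)) = e * (f * f) + e * f * e + (e * e) * f + (e * e) * e := by
    noncomm_ring
  have hr : (f + e) * (f + e) * e = (f * f) * e + f * (e * e) + e * f * e + (e * e) * e := by
    noncomm_ring
  rw [Commute, SemiconjBy, hl, hr, he, hf]
  simp only [mul_one, one_mul]
  abel

end Involution

lemma IsSelfAdjoint.mul_self {R : Type*} [Semiring R] [StarRing R] {b : R}
    (hb : IsSelfAdjoint b) : IsSelfAdjoint (b * b) := by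
  rw [← sq]
  exact hb.pow 2

section Polar

variable {A : Type*} [CStarAlgebra A]

/-- For self-adjoint `b` with `b²` invertible this is `b |b|⁻¹`, the unitary factor of the polar
decomposition of `b`. -/
noncomputable def polarUnitary (b : A) : A :=
  b * cfc (fun x : ℝ => (√x)⁻¹) (b * b)

lemma commute_cfc_mul_self (f : ℝ → ℝ) (b : A) : Commute (cfc f (b * b)) b :=
  ((Commute.refl b).mul_right (Commute.refl b)).symm.cfc_real f

lemma star_polarUnitary (b : A) :
    star (polarUnitary b) = cfc (fun x : ℝ => (√x)⁻¹) (b * b) * star b := by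
  rw [polarUnitary, star_mul, (cfc_predicate _ (b * b) : IsSelfAdjoint _).star_eq]

variable {b : A}

lemma cfc_inv_sqrt_mul_cfc_inv_sqrt_mul_self (hb : IsSelfAdjoint b)
    (hspec : ∀ x ∈ spectrum ℝ (b * b), 0 < x) :
    cfc (fun x : ℝ => (√x)⁻¹) (b * b) * cfc (fun x : ℝ => (√x)⁻¹) (b * b) * (b * b) = 1 := by
  have hbb : IsSelfAdjoint (b * b) := hb.mul_self
  have hg := continuousOn_inv_sqrt hspec
  calc cfc (fun x : ℝ => (√x)⁻¹) (b * b) * cfc (fun x : ℝ => (√x)⁻¹) (b * b) * (b * b)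
      = cfc (fun x : ℝ => (√x)⁻¹ * (√x)⁻¹ * x) (b * b) := by
        rw [cfc_mul (fun x : ℝ => (√x)⁻¹ * (√x)⁻¹) (fun x => x) _ (hg.mul hg),
          cfc_mul _ _ _ hg hg, cfc_id' ℝ (b * b) hbb]
    _ = cfc (fun _ : ℝ => (1 : ℝ)) (b * b) := by
        refine cfc_congr fun x hx => ?_
        have hx0 := hspec x hx
        field_simp
        exact (Real.sq_sqrt hx0.le).symm
    _ = 1 := cfc_const_one ℝ (b * b) hbb

lemma polarUnitary_mem_unitary (hb : IsSelfAdjoint b)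
    (hspec : ∀ x ∈ spectrum ℝ (b * b), 0 < x) : polarUnitary b ∈ unitary A := by
  set r := cfc (fun x : ℝ => (√x)⁻¹) (b * b) with hr
  have hrb : r * b = b * r := (commute_cfc_mul_self _ b).eq
  have hrr : r * r * (b * b) = 1 := cfc_inv_sqrt_mul_cfc_inv_sqrt_mul_self hb hspec
  rw [Unitary.mem_iff, star_polarUnitary, polarUnitary, ← hr, hb.star_eq]
  have key : r * b * (r * b) = 1 := by
    rw [mul_assoc, ← mul_assoc b, ← hrb, ← hrr]
    simp only [mul_assoc]
  exact ⟨by rw [← hrb]; exact key, by rw [← hrb]; exact key⟩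

lemma mul_polarUnitary_eq_of_mul_eq {x y : A} (hxb : x * b = b * y)
    (hy : Commute (b * b) y) : x * polarUnitary b = polarUnitary b * y := by
  have hyr := hy.cfc_real fun x : ℝ => (√x)⁻¹
  rw [polarUnitary, ← mul_assoc, hxb, mul_assoc, ← hyr.eq, mul_assoc]

lemma polarUnitary_add_self {e : A} (he : e * e = 1) : polarUnitary (e + e) = e := by
  have h4 : (e + e) * (e + e) = algebraMap ℝ A 4 := by
    rw [add_mul_self_add_eq_four_sub he he, sub_self, mul_zero, sub_zero, map_ofNat]
  have hsqrt : (√(4 : ℝ))⁻¹ = 2⁻¹ := by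
    rw [show (4 : ℝ) = 2 ^ 2 by norm_num, Real.sqrt_sq zero_le_two]
  rw [polarUnitary, h4, cfc_algebraMap, hsqrt, Algebra.algebraMap_eq_smul_one, mul_smul_one,
    ← two_smul ℝ e, smul_smul, inv_mul_cancel₀ two_ne_zero, one_smul]

end Polar

section LocalSection

variable {A : Type*} [CStarAlgebra A] {e f : A}

noncomputable def conjSection (e f : A) : A :=
  polarUnitary (f + e) * e

lemma spectrum_add_mul_self_add_subset_Icc (he : e * e = 1) (hf : f * f = 1)
    (hfe : ‖f - e‖ ≤ 1) : spectrum ℝ ((f + e) * (f + e)) ⊆ Set.Icc 3 5 := by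
  nontriviality A
  have hnorm : ‖(f + e) * (f + e) - algebraMap ℝ A 4‖ ≤ 1 := by
    rw [add_mul_self_add_eq_four_sub he hf, map_ofNat, sub_sub_cancel_left, norm_neg]
    calc ‖(f - e) * (f - e)‖ ≤ ‖f - e‖ * ‖f - e‖ := norm_mul_le _ _
      _ ≤ 1 := mul_le_one₀ hfe (norm_nonneg _) hfe
  convert spectrum_subset_Icc_of_norm_sub_algebraMap_le hnorm using 2 <;> norm_num

lemma conjSection_mem_unitary (he : IsSelfAdjoint e) (he2 : e * e = 1) (hf : IsSelfAdjoint f)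
    (hf2 : f * f = 1) (hfe : ‖f - e‖ ≤ 1) : conjSection e f ∈ unitary A := by
  refine mul_mem (polarUnitary_mem_unitary (hf.add he) fun x hx => ?_) ?_
  · linarith [(spectrum_add_mul_self_add_subset_Icc he2 hf2 hfe hx).1]
  · rw [Unitary.mem_iff, he.star_eq, and_self, he2]

lemma conjSection_mul_mul_star (he : IsSelfAdjoint e) (he2 : e * e = 1) (hf : IsSelfAdjoint f)
    (hf2 : f * f = 1) (hfe : ‖f - e‖ ≤ 1) :
    conjSection e f * e * star (conjSection e f) = f := by
  have hu := polarUnitary_mem_unitary (hf.add he) fun x hx => by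
    linarith [(spectrum_add_mul_self_add_subset_Icc he2 hf2 hfe hx).1]
  have hfu : f * polarUnitary (f + e) = polarUnitary (f + e) * e :=
    mul_polarUnitary_eq_of_mul_eq (mul_add_eq_add_mul_of_mul_self_eq_one he2 hf2)
      (commute_add_mul_self_add he2 hf2).symm
  set p := polarUnitary (f + e)
  rw [conjSection, star_mul, he.star_eq]
  calc p * e * e * (e * star p) = p * e * star p := by
        rw [mul_assoc p e e, he2, mul_one, ← mul_assoc]
    _ = f * p * star p := by rw [hfu]
    _ = f := by rw [mul_assoc, Unitary.mul_star_self_of_mem hu, mul_one]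

lemma conjSection_self (he2 : e * e = 1) : conjSection e e = 1 := by
  rw [conjSection, polarUnitary_add_self he2, he2]

lemma continuousOn_conjSection (he : IsSelfAdjoint e) (he2 : e * e = 1) :
    ContinuousOn (conjSection e) {f | IsSelfAdjoint f ∧ f * f = 1 ∧ ‖f - e‖ ≤ 1} := by
  have hcfc : ContinuousOn (fun f => cfc (fun x : ℝ => (√x)⁻¹) ((f + e) * (f + e)))
      {f | IsSelfAdjoint f ∧ f * f = 1 ∧ ‖f - e‖ ≤ 1} :=
    ContinuousOn.cfc' isCompact_Icc _ (by fun_prop)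
      (fun f ⟨_, hf2, hfe⟩ => spectrum_add_mul_self_add_subset_Icc he2 hf2 hfe)
      (fun f ⟨hf, _, _⟩ => (hf.add he).mul_self)
      (continuousOn_inv_sqrt fun x hx => by linarith [hx.1])
  exact ((continuousOn_id.add continuousOn_const).mul hcfc).mul continuousOn_const

end LocalSection

theorem stmt7_general {H : Type*} [NormedAddCommGroup H] [InnerProductSpace ℂ H] [CompleteSpace H]
    (F₀ : H →L[ℂ] H) (hF₀ : MemP F₀) :
    ∃ N : Set {F : H →L[ℂ] H // MemP F}, IsOpen N ∧
      ∃ hmem : (⟨F₀, hF₀⟩ : {F : H →L[ℂ] H // MemP F}) ∈ N,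
      ∃ u : N → unitary (H →L[ℂ] H),
        Continuous u ∧
        u ⟨⟨F₀, hF₀⟩, hmem⟩ = 1 ∧
        ∀ F : N, (u F : H →L[ℂ] H) * F₀ * star (u F : H →L[ℂ] H) = ((F : {F : H →L[ℂ] H // MemP F}) : H →L[ℂ] H) := by
  obtain ⟨hsa₀, hsq₀, -⟩ := id hF₀
  let N : Set {F : H →L[ℂ] H // MemP F} := {F | ‖(F : H →L[ℂ] H) - F₀‖ < 1}
  have hN : IsOpen N := isOpen_lt (by fun_prop) continuous_const
  have hmem : (⟨F₀, hF₀⟩ : {F : H →L[ℂ] H // MemP F}) ∈ N := by simp [N]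
  have hnear (F : N) : ‖(F : H →L[ℂ] H) - F₀‖ ≤ 1 := F.2.le
  refine ⟨N, hN, hmem,
    fun F => ⟨conjSection F₀ F, conjSection_mem_unitary hsa₀ hsq₀ F.1.2.1 F.1.2.2.1 (hnear F)⟩,
    ?_, Subtype.ext (conjSection_self hsq₀),
    fun F => conjSection_mul_mul_star hsa₀ hsq₀ F.1.2.1 F.1.2.2.1 (hnear F)⟩
  exact ((continuousOn_conjSection hsa₀ hsq₀).comp_continuous (by fun_prop)
    fun F => ⟨F.1.2.1, F.1.2.2.1, hnear F⟩).subtype_mk _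

/-- For `F₀ ∈ P(H)` (`H` a separable infinite-dimensional complex Hilbert
space), the conjugation map `U(H) → P(H)`, `v ↦ v F₀ v⁻¹`, admits a continuous local
section near `F₀`: there are an open neighborhood `N` of `F₀` in `P(H)` and a continuous
map `u : N → U(H)` with `u F₀ = 1` and `u F * F₀ * (u F)⁻¹ = F` for all `F ∈ N`. -/
theorem stmt7 {H : Type*} [NormedAddCommGroup H] [InnerProductSpace ℂ H] [CompleteSpace H]
    [TopologicalSpace.SeparableSpace H] (hinf : ¬FiniteDimensional ℂ H)
    (F₀ : H →L[ℂ] H) (hF₀ : MemP F₀) :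
    ∃ N : Set {F : H →L[ℂ] H // MemP F}, IsOpen N ∧
      ∃ hmem : (⟨F₀, hF₀⟩ : {F : H →L[ℂ] H // MemP F}) ∈ N,
      ∃ u : N → unitary (H →L[ℂ] H),
        Continuous u ∧
        u ⟨⟨F₀, hF₀⟩, hmem⟩ = 1 ∧
        ∀ F : N, (u F : H →L[ℂ] H) * F₀ * star (u F : H →L[ℂ] H) = ((F : {F : H →L[ℂ] H // MemP F}) : H →L[ℂ] H) :=
  stmt7_general F₀ hF₀
end

section
/- Let H be a real Hilbert space and let A be an invertible bounded skew-adjoint operator on H (i.e. A* = −A). Set J = A·(A*A)^{−1/2}. Then J is skew-adjoint with J² = −1, and for every t ∈ [0,1] the operator (1−t)·A + t·J is an invertible skew-adjoint operator; in particular A is joined, by a norm-continuous path inside the set of invertible skew-adjoint operators, to an operator J satisfying J² = −1. -/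
/-!
Since `A` is skew-adjoint, `A*A = -A²` commutes with `A`, hence so does its inverse `S²`.
A coercive symmetric operator `S` commutes with everything its square commutes with: if
`m ≤ S ≤ M` with `0 < m`, then `B = 1 - S / M` has norm `≤ 1 - m / M < 1`, while `D = SA - AS`
satisfies `SD = -DS`, i.e. `2D = BD + DB`, which forces `D = 0`. Once `S` commutes with `A`,
`J = AS` is skew-adjoint with `J² = A²S² = -1`, and `(1 - t)A + tJ = A((1 - t) + tS)` is
skew-adjoint and invertible, its second factor being coercive.
-/

open scoped RealInnerProductSpace

namespace ContinuousLinearMap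

variable {E : Type*} [NormedAddCommGroup E] [InnerProductSpace ℝ E]

theorem IsPositive.real_inner_map_sq_le {T : E →L[ℝ] E} (hT : T.IsPositive) (x y : E) :
    ⟪T x, y⟫ ^ 2 ≤ ⟪T x, x⟫ * ⟪T y, y⟫ := by
  have hsymm : ⟪T y, x⟫ = ⟪T x, y⟫ := by rw [hT.inner_left_eq_inner_right, real_inner_comm]
  have hquad : ∀ c : ℝ, 0 ≤ ⟪T y, y⟫ * (c * c) + 2 * ⟪T x, y⟫ * c + ⟪T x, x⟫ := fun c => by
    have := hT.inner_nonneg_left (x + c • y)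
    simp only [map_add, map_smul, inner_add_left, inner_add_right, real_inner_smul_left,
      real_inner_smul_right, hsymm] at this
    linarith
  have := discrim_le_zero hquad
  rw [discrim] at this
  linarith

theorem IsPositive.exists_pos_mul_sq_le_inner {T : E →L[ℝ] E} (hT : T.IsPositive)
    (hu : IsUnit T) : ∃ m > 0, ∀ x, m * ‖x‖ ^ 2 ≤ ⟪T x, x⟫ := by
  obtain ⟨u, rfl⟩ := hu
  set R : E →L[ℝ] E := ↑u⁻¹
  have huR : ∀ x, (u : E →L[ℝ] E) (R x) = x := fun x => congr($(u.mul_inv) x)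
  refine ⟨(‖R‖ + 1)⁻¹, by positivity, fun x => ?_⟩
  rw [inv_mul_le_iff₀ (by positivity)]
  -- `‖x‖⁴ = ⟪T (R x), x⟫² ≤ ⟪T (R x), R x⟫ ⟪T x, x⟫ = ⟪R x, x⟫ ⟪T x, x⟫ ≤ ‖R‖ ‖x‖² ⟪T x, x⟫`
  have hcs := hT.real_inner_map_sq_le (R x) x
  rw [huR, real_inner_self_eq_norm_sq, real_inner_comm] at hcs
  have hxR : ⟪R x, x⟫ ≤ ‖R‖ * ‖x‖ ^ 2 := by
    calc ⟪R x, x⟫ ≤ ‖R x‖ * ‖x‖ := real_inner_le_norm _ _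
      _ ≤ ‖R‖ * ‖x‖ * ‖x‖ := by gcongr; exact R.le_opNorm x
      _ = ‖R‖ * ‖x‖ ^ 2 := by ring
  have hTx := hT.inner_nonneg_left x
  rcases (sq_nonneg ‖x‖).eq_or_lt with hx | hx
  · rw [← hx]; positivity
  · refine le_of_mul_le_mul_left ?_ hx
    nlinarith

theorem norm_le_of_abs_inner_le {T : E →L[ℝ] E} (hT : T.IsSymmetric) {c : ℝ} (hc : 0 ≤ c)
    (h : ∀ x, |⟪T x, x⟫| ≤ c * ‖x‖ ^ 2) : ‖T‖ ≤ c := by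
  rw [T.norm_eq_iSup_rayleighQuotient hT]
  refine ciSup_le fun x => ?_
  rw [rayleighQuotient, reApplyInnerSelf_apply, abs_div, abs_sq]
  exact div_le_of_le_mul₀ (sq_nonneg _) hc (h x)

theorem eq_zero_of_mul_eq_neg_mul {S D : E →L[ℝ] E} (hS : S.IsSymmetric) {m : ℝ} (hm : 0 < m)
    (hcoer : ∀ x, m * ‖x‖ ^ 2 ≤ ⟪S x, x⟫) (hSD : S * D = -(D * S)) : D = 0 := by
  set M := ‖S‖ + m
  have hM : 0 < M := by positivity
  set B : E →L[ℝ] E := 1 - M⁻¹ • S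
  have hmM : m ≤ M := le_add_of_nonneg_left (norm_nonneg S)
  have hB : ‖B‖ ≤ 1 - m / M := by
    have hBsymm : B.IsSymmetric := fun x y => by
      have hSxy : ⟪S x, y⟫ = ⟪x, S y⟫ := hS x y
      simp only [B, coe_coe, sub_apply, smul_apply, one_apply_eq_self, inner_sub_left,
        inner_sub_right, real_inner_smul_left, real_inner_smul_right, hSxy]
    refine norm_le_of_abs_inner_le hBsymm (by rw [sub_nonneg, div_le_one hM]; exact hmM)
      fun x => ?_
    have hSx : ⟪S x, x⟫ ≤ (M - m) * ‖x‖ ^ 2 := by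
      calc ⟪S x, x⟫ ≤ ‖S x‖ * ‖x‖ := real_inner_le_norm _ _
        _ ≤ ‖S‖ * ‖x‖ * ‖x‖ := by gcongr; exact S.le_opNorm x
        _ = (M - m) * ‖x‖ ^ 2 := by ring
    have hBx : ⟪B x, x⟫ = (M * ‖x‖ ^ 2 - ⟪S x, x⟫) / M := by
      simp only [B, sub_apply, smul_apply, one_apply_eq_self, inner_sub_left,
        real_inner_smul_left, real_inner_self_eq_norm_sq]
      field_simp
    have hx := hcoer x
    have hbound : (1 - m / M) * ‖x‖ ^ 2 * M = (M - m) * ‖x‖ ^ 2 := by field_simp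
    rw [hBx, abs_div, abs_of_pos hM, div_le_iff₀ hM, hbound, abs_le]
    constructor <;> nlinarith [sq_nonneg ‖x‖]
  have h2D : (2 : ℝ) • D = B * D + D * B := by
    simp only [B, sub_mul, mul_sub, one_mul, mul_one, smul_mul_assoc, mul_smul_comm, hSD]
    module
  have hD : 2 * ‖D‖ ≤ 2 * ((1 - m / M) * ‖D‖) :=
    calc 2 * ‖D‖ = ‖B * D + D * B‖ := by rw [← h2D, norm_smul, Real.norm_two]
      _ ≤ ‖B‖ * ‖D‖ + ‖D‖ * ‖B‖ := (norm_add_le _ _).trans (by gcongr <;> exact norm_mul_le _ _)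
      _ ≤ 2 * ((1 - m / M) * ‖D‖) := by nlinarith [norm_nonneg D]
  have : m / M * ‖D‖ ≤ 0 := by linarith
  exact norm_le_zero_iff.mp (nonpos_of_mul_nonpos_right this (by positivity))

theorem commute_of_commute_mul_self {S A : E →L[ℝ] E} (hS : S.IsSymmetric) {m : ℝ} (hm : 0 < m)
    (hcoer : ∀ x, m * ‖x‖ ^ 2 ≤ ⟪S x, x⟫) (hSA : Commute (S * S) A) : Commute S A := by
  have hD : S * (S * A - A * S) = -((S * A - A * S) * S) := by
    rw [mul_sub, sub_mul, ← mul_assoc, hSA.eq]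
    noncomm_ring
  exact sub_eq_zero.mp (eq_zero_of_mul_eq_neg_mul hS hm hcoer hD)

theorem isUnit_of_pos_mul_sq_le_inner [CompleteSpace E] {T : E →L[ℝ] E} {m : ℝ} (hm : 0 < m)
    (hcoer : ∀ x, m * ‖x‖ ^ 2 ≤ ⟪T x, x⟫) : IsUnit T :=
  isUnit_of_forall_le_norm_inner_map T (c := m.toNNReal) (Real.toNNReal_pos.mpr hm) fun x => by
    rw [Real.coe_toNNReal _ hm.le, mul_comm, Real.norm_eq_abs]
    exact (hcoer x).trans (le_abs_self _)

theorem isUnit_sub_smul_one_add_smul [CompleteSpace E] {S : E →L[ℝ] E} {m : ℝ} (hm : 0 < m)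
    (hcoer : ∀ x, m * ‖x‖ ^ 2 ≤ ⟪S x, x⟫) {t : ℝ} (ht : t ∈ Set.Icc (0 : ℝ) 1) :
    IsUnit ((1 - t) • (1 : E →L[ℝ] E) + t • S) := by
  refine isUnit_of_pos_mul_sq_le_inner (m := min 1 m) (lt_min one_pos hm) fun x => ?_
  have hx : ⟪((1 - t) • (1 : E →L[ℝ] E) + t • S) x, x⟫ = (1 - t) * ‖x‖ ^ 2 + t * ⟪S x, x⟫ := by
    simp only [add_apply, smul_apply, one_apply_eq_self, inner_add_left, real_inner_smul_left,
      real_inner_self_eq_norm_sq]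
  rw [hx]
  have h1 : min 1 m * ‖x‖ ^ 2 ≤ ‖x‖ ^ 2 := mul_le_of_le_one_left (sq_nonneg _) (min_le_left _ _)
  have h2 : min 1 m * ‖x‖ ^ 2 ≤ ⟪S x, x⟫ :=
    (mul_le_mul_of_nonneg_right (min_le_right 1 m) (sq_nonneg _)).trans (hcoer x)
  linarith [mul_le_mul_of_nonneg_left h1 (sub_nonneg.2 ht.2), mul_le_mul_of_nonneg_left h2 ht.1]

end ContinuousLinearMap

open ContinuousLinearMap

/-- Let `A` be an invertible bounded skew-adjoint operator on a real
Hilbert space, and let `S` be the positive square root of `(A*A)⁻¹` (so that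
`J = A * S = A • (A*A)^(-1/2)`).  Then `J` is skew-adjoint with `J * J = -1`, and the
straight-line segment from `A` to `J` consists of invertible skew-adjoint operators; in
particular `A` is joined to a complex structure by a norm-continuous path inside the
invertible skew-adjoint operators. -/
theorem stmt10 {H : Type*} [NormedAddCommGroup H] [InnerProductSpace ℝ H] [CompleteSpace H]
    (A S : H →L[ℝ] H)
    (hA : ContinuousLinearMap.adjoint A = -A) (hAinv : IsUnit A)
    (hS_sa : IsSelfAdjoint S)
    (hS_pos : ∀ x : H, 0 ≤ (inner ℝ (S x) x : ℝ))
    (hS : S * S * (ContinuousLinearMap.adjoint A * A) = 1) :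
    ContinuousLinearMap.adjoint (A * S) = -(A * S) ∧
    (A * S) * (A * S) = -1 ∧
    (∀ t ∈ Set.Icc (0 : ℝ) 1,
      ContinuousLinearMap.adjoint ((1 - t) • A + t • (A * S))
          = -((1 - t) • A + t • (A * S)) ∧
      IsUnit ((1 - t) • A + t • (A * S))) ∧
    JoinedIn {T : H →L[ℝ] H | ContinuousLinearMap.adjoint T = -T ∧ IsUnit T} A (A * S) := by
  have hN : adjoint A * A = -(A * A) := by rw [hA, neg_mul]
  have hNS : adjoint A * A * (S * S) = 1 := by
    simpa [← star_eq_adjoint, hS_sa.star_eq, mul_assoc] using congrArg star hS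
  let u : (H →L[ℝ] H)ˣ := ⟨adjoint A * A, S * S, hNS, hS⟩
  have hSS_A : Commute (S * S) A :=
    (Commute.units_inv_right (u := u) (by simp [u, hN])).symm
  obtain ⟨m, hm, hcoer⟩ := ((isPositive_iff' S).mpr ⟨hS_sa, hS_pos⟩).exists_pos_mul_sq_le_inner
    (isUnit_mul_self_iff.mp u⁻¹.isUnit)
  have hSA : Commute S A := commute_of_commute_mul_self hS_sa.isSymmetric hm hcoer hSS_A
  have hJ : adjoint (A * S) = -(A * S) := by
    rw [← star_eq_adjoint, star_mul, hS_sa.star_eq, star_eq_adjoint, hA, mul_neg, hSA.eq]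
  have hseg : ∀ t ∈ Set.Icc (0 : ℝ) 1,
      adjoint ((1 - t) • A + t • (A * S)) = -((1 - t) • A + t • (A * S)) ∧
      IsUnit ((1 - t) • A + t • (A * S)) := fun t ht => by
    refine ⟨by simp [hA, hJ, add_comm], ?_⟩
    rw [show (1 - t) • A + t • (A * S) = A * ((1 - t) • 1 + t • S) by
      rw [mul_add, mul_smul_comm, mul_smul_comm, mul_one]]
    exact hAinv.mul (isUnit_sub_smul_one_add_smul hm hcoer ht)
  refine ⟨hJ, ?_, hseg, JoinedIn.of_segment_subset ?_⟩
  · calc A * S * (A * S) = -(adjoint A * A * (S * S)) := by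
          rw [hN, neg_mul, neg_neg, ← mul_assoc, mul_assoc A S A, hSA.eq]; simp only [mul_assoc]
      _ = -1 := by rw [hNS]
  · rw [segment_eq_image]
    rintro _ ⟨t, ht, rfl⟩
    exact hseg t ht
end

section
/- For a positive integer n define m(n) = ∏_q q^{⌊n/(q−1)⌋}, the product taken over all primes q with q − 1 ≤ n. Then for every integer r ≥ 1, the rational number m(2r) · B_{2r} / (2r)! has denominator (in lowest terms) a power of 2; equivalently, for every odd prime q the q-adic valuation of the rational number B_{2r} / (2r)! is at least −⌊2r/(q−1)⌋. -/
/-!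
Comparing coefficients in `(t / (e^t - 1)) * (e^t - 1) = t` expresses `B_n / n!` as
`-∑_{k<n} (B_k / k!) / (n + 1 - k)!`. Legendre's formula gives `v_q(m!) ≤ ⌊(m - 1)/(q - 1)⌋`,
so by strong induction `v_q(B_n / n!) ≥ -⌊n/(q - 1)⌋` for every prime `q`, the floors being
superadditive. Since `q^⌊n/(q - 1)⌋` divides `m(n)`, the rational `m(n) B_n / n!` has nonnegative
valuation at every prime, hence is an integer.
-/

/-- Adams' number `m(n) = ∏_q q^⌊n/(q-1)⌋`, the product over all primes `q` with
`q - 1 ≤ n`. -/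
def adamsNumber (n : ℕ) : ℕ :=
  ∏ q ∈ (Finset.range (n + 2)).filter (fun q => q.Prime ∧ q - 1 ≤ n), q ^ (n / (q - 1))

open Finset Nat

theorem adamsNumber_ne_zero (n : ℕ) : adamsNumber n ≠ 0 :=
  prod_ne_zero_iff.mpr fun _ hq => pow_ne_zero _ (mem_filter.mp hq).2.1.ne_zero

theorem pow_div_sub_one_dvd_adamsNumber {q : ℕ} (hq : q.Prime) (n : ℕ) :
    q ^ (n / (q - 1)) ∣ adamsNumber n := by
  rcases le_or_gt (q - 1) n with hle | hlt
  · refine dvd_prod_of_mem _ (mem_filter.mpr ⟨mem_range.mpr ?_, hq, hle⟩)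
    have := hq.two_le
    omega
  · simp [Nat.div_eq_of_lt hlt]

theorem padicValNat_factorial_le_pred_div (p : ℕ) [hp : Fact p.Prime] (m : ℕ) :
    padicValNat p m ! ≤ (m - 1) / (p - 1) := by
  rcases eq_or_ne m 0 with rfl | hm
  · simp
  have := sub_one_mul_padicValNat_factorial_lt_of_ne_zero p hm
  rw [Nat.le_div_iff_mul_le (Nat.sub_pos_of_lt hp.out.one_lt), mul_comm]
  omega

theorem padicValRat_sum_ge {ι : Type*} (p : ℕ) [Fact p.Prime] {c : ℤ} (hc : c ≤ 0)
    {s : Finset ι} {F : ι → ℚ} (hF : ∀ i ∈ s, c ≤ padicValRat p (F i)) :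
    c ≤ padicValRat p (∑ i ∈ s, F i) := by
  classical
  induction s using Finset.induction_on with
  | empty => simpa using hc
  | insert i s hi ih =>
    rw [sum_insert hi]
    rcases eq_or_ne (F i + ∑ j ∈ s, F j) 0 with h0 | h0
    · simpa [h0] using hc
    refine le_trans (le_min ?_ ?_) (padicValRat.min_le_padicValRat_add h0)
    · exact hF i (mem_insert_self i s)
    · exact ih fun j hj => hF j (mem_insert_of_mem hj)

theorem Rat.den_eq_one_of_padicValRat_nonneg {x : ℚ}
    (hx : ∀ p : ℕ, p.Prime → 0 ≤ padicValRat p x) : x.den = 1 := by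
  by_contra hden
  obtain ⟨p, hp, hpden⟩ := Nat.exists_prime_and_dvd hden
  have : Fact p.Prime := ⟨hp⟩
  have hnum : padicValInt p x.num = 0 := by
    refine padicValInt.eq_zero_of_not_dvd fun hpnum => hp.one_lt.ne' ?_
    exact (x.reduced.coprime_dvd_left (Int.ofNat_dvd_left.mp hpnum)).eq_one_of_dvd hpden
  have hden_val := one_le_padicValNat_of_dvd x.den_nz hpden
  have hx_val := hx p hp
  rw [padicValRat, hnum] at hx_val
  omega

theorem bernoulli_div_factorial_eq_neg_sum {n : ℕ} (hn : n ≠ 0) :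
    bernoulli n / n ! = -∑ k ∈ range n, bernoulli k / k ! / ((n + 1 - k) ! : ℕ) := by
  have hrec := sum_bernoulli (n + 1)
  rw [if_neg (by omega), sum_range_succ] at hrec
  have hterm : ∀ k ≤ n, ((n + 1).choose k : ℚ) * bernoulli k
      = (n + 1)! * (bernoulli k / k ! / ((n + 1 - k) ! : ℕ)) := by
    intro k hk
    rw [Nat.cast_choose ℚ (hk.trans n.le_succ)]
    field_simp
  rw [hterm n le_rfl, sum_congr rfl fun k hk => hterm k (mem_range.mp hk).le, ← mul_sum,
    ← mul_add, Nat.add_sub_cancel_left] at hrec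
  have hsum := (mul_eq_zero.mp hrec).resolve_left (by positivity)
  simp only [factorial_one, cast_one, div_one] at hsum
  linear_combination hsum

theorem neg_div_sub_one_le_padicValRat_bernoulli_div_factorial (q : ℕ) [Fact q.Prime] (n : ℕ) :
    -((n / (q - 1) : ℕ) : ℤ) ≤ padicValRat q (bernoulli n / n !) := by
  induction n using Nat.strong_induction_on with
  | _ n ih =>
  rcases eq_or_ne n 0 with rfl | hn
  · simp
  rw [bernoulli_div_factorial_eq_neg_sum hn, padicValRat.neg]
  refine padicValRat_sum_ge q (neg_nonpos.mpr (Int.natCast_nonneg _)) fun i hi => ?_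
  have hi : i < n := mem_range.mp hi
  rcases eq_or_ne (bernoulli i) 0 with hB | hB
  · rw [hB, zero_div, zero_div, padicValRat.zero]
    exact neg_nonpos.mpr (Int.natCast_nonneg _)
  rw [padicValRat.div (by positivity) (by positivity), padicValRat.of_nat]
  have hfac : padicValNat q (n + 1 - i)! ≤ (n - i) / (q - 1) := by
    simpa [show n + 1 - i - 1 = n - i by omega] using
      padicValNat_factorial_le_pred_div q (n + 1 - i)
  have hfloor : i / (q - 1) + (n - i) / (q - 1) ≤ n / (q - 1) := by
    simpa [show i + (n - i) = n by omega] using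
      Nat.div_add_div_le_add_div (x := i) (y := n - i) (z := q - 1)
  have hval := ih i hi
  omega

theorem adamsNumber_mul_bernoulli_div_factorial_den (n : ℕ) :
    ((adamsNumber n : ℚ) * bernoulli n / n !).den = 1 := by
  refine Rat.den_eq_one_of_padicValRat_nonneg fun q hq => ?_
  have : Fact q.Prime := ⟨hq⟩
  rcases eq_or_ne (bernoulli n) 0 with hB | hB
  · simp [hB]
  have hm : n / (q - 1) ≤ padicValNat q (adamsNumber n) :=
    (padicValNat_dvd_iff_le (adamsNumber_ne_zero n)).mp (pow_div_sub_one_dvd_adamsNumber hq n)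
  have hval := neg_div_sub_one_le_padicValRat_bernoulli_div_factorial q n
  rw [mul_div_assoc, padicValRat.mul (by simpa using adamsNumber_ne_zero n) (by positivity),
    padicValRat.of_nat]
  omega

theorem stmt14_general (r : ℕ) :
    (∃ k : ℕ,
      ((adamsNumber (2 * r) : ℚ) * bernoulli (2 * r) / ((2 * r).factorial : ℚ)).den
        = 2 ^ k) ∧
    ∀ q : ℕ, q.Prime → Odd q →
      -((2 * r / (q - 1) : ℕ) : ℤ)
        ≤ padicValRat q (bernoulli (2 * r) / ((2 * r).factorial : ℚ)) :=
  ⟨⟨0, adamsNumber_mul_bernoulli_div_factorial_den (2 * r)⟩, fun q hq _ =>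
    have : Fact q.Prime := ⟨hq⟩
    neg_div_sub_one_le_padicValRat_bernoulli_div_factorial q (2 * r)⟩

/-- For every integer `r ≥ 1`, the rational number
`m(2r) * B_{2r} / (2r)!` has denominator a power of `2`; equivalently, for every odd prime
`q`, the `q`-adic valuation of `B_{2r} / (2r)!` is at least `-⌊2r/(q-1)⌋`. -/
theorem stmt14 (r : ℕ) (hr : 1 ≤ r) :
    (∃ k : ℕ,
      ((adamsNumber (2 * r) : ℚ) * bernoulli (2 * r) / ((2 * r).factorial : ℚ)).den
        = 2 ^ k) ∧
    ∀ q : ℕ, q.Prime → Odd q →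
      -((2 * r / (q - 1) : ℕ) : ℤ)
        ≤ padicValRat q (bernoulli (2 * r) / ((2 * r).factorial : ℚ)) :=
  stmt14_general r
end
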